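/- For every real number ε, every d ≥ 1 and every function MLP : ℝ² → ℝᵈ, the hidden state MLP(m(v)) that one iteration of GIN message passing assigns to the center v of graph G equals the hidden state MLP(m(v′)) it assigns to the center v′ of graph G′; in particular, one iteration of GIN message passing (with any, in particular any injective, update function) cannot distinguish v from v′. -/

import Mathlib

/-- One-hop GIN node message at the center `v` of graph `G`. -/
noncomputable def ginMsgV (ε : ℝ) : ℝ × ℝ :=
  ((1 + ε) * 1 + (1/3 + 2/3), 1/2 + 1/2)

/-- One-hop GIN node message at the center `v′` of graph `G′`. -/
noncomputable def ginMsgV' (ε : ℝ) : ℝ × ℝ :=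
  ((1 + ε) * 1 + (1/3 + 1/3 + 1/3), 1/3 + 1/3 + 1/3)

theorem ginMsgV_eq (ε : ℝ) : ginMsgV ε = (2 + ε, 1) := by
  unfold ginMsgV
  ext <;> norm_num
  ring

theorem ginMsgV'_eq (ε : ℝ) : ginMsgV' ε = (2 + ε, 1) := by
  unfold ginMsgV'
  ext <;> norm_num
  ring

theorem gin_cannot_distinguish_general (ε : ℝ) (d : ℕ)
    (MLP : ℝ × ℝ → (Fin d → ℝ)) :
    MLP (ginMsgV ε) = MLP (ginMsgV' ε) := by
  rw [ginMsgV_eq, ginMsgV'_eq]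

/-- for every real ε, every `d ≥ 1` and every update function
`MLP : ℝ² → ℝᵈ`, the hidden state that one iteration of GIN message passing assigns
to the center `v` of `G` equals the one it assigns to the center `v′` of `G′`;
in particular one GIN iteration (with any, in particular any injective, update
function) cannot distinguish `v` from `v′`. -/
theorem gin_cannot_distinguish (ε : ℝ) (d : ℕ) (hd : 1 ≤ d)
    (MLP : ℝ × ℝ → (Fin d → ℝ)) :
    MLP (ginMsgV ε) = MLP (ginMsgV' ε) :=
  gin_cannot_distinguish_general ε d MLP
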